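/- Let R = ⊕_{i∈ℤ} R_i be a ℤ-graded (associative, not necessarily unital) ring, let W be the set of homogeneous elements of R lying in the nil radical N(R), and let M = Σ_{a∈W} ⟨a⟩ be the sum of the two-sided ideals generated by the elements of W. Then M is a homogeneous nil ideal of R, and the nil radical of the quotient ring R/M contains no nonzero homogeneous elements (with respect to the induced ℤ-grading on R/M). -/

import Mathlib

/-!
A sum of two nil ideals `I + J` is nil: if `z ^ m = 0` with `z ∈ J`, then `(y + z) ^ m ∈ I` for
`y ∈ I`. So the nil radical, a directed union of nil ideals, is nil, and hence so is `M ≤ N(R)`.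
`M` is homogeneous because it is generated by homogeneous elements. Since `M` is nil, the preimage
in `R` of `N(R/M)` is nil too, so a homogeneous element of `R` whose image lies in `N(R/M)` belongs
to `N(R)`; it is then one of the generators of `M`, and its image is zero.
-/

/-- An iterated-product power for non-unital rings: `ppow a n = a ^ (n + 1)`. -/
def ppow {R : Type*} [NonUnitalRing R] (a : R) : ℕ → R
  | 0 => a
  | n + 1 => ppow a n * a

/-- An element of a (possibly non-unital) ring is nilpotent if some positive power vanishes. -/
def IsNilElem {R : Type*} [NonUnitalRing R] (a : R) : Prop :=
  ∃ n : ℕ, ppow a n = 0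

/-- A two-sided ideal is nil if all of its elements are nilpotent. -/
def TwoSidedIdeal.IsNil {R : Type*} [NonUnitalRing R] (I : TwoSidedIdeal R) : Prop :=
  ∀ x ∈ I, IsNilElem x

/-- The nil radical of a (possibly non-unital) ring: the sum of all its nil two-sided ideals. -/
noncomputable def nilRad (R : Type*) [NonUnitalRing R] : TwoSidedIdeal R :=
  sSup {I : TwoSidedIdeal R | I.IsNil}

open DirectSum TwoSidedIdeal

section

variable {R : Type*} [NonUnitalRing R]

lemma ppow_add_add_one (a : R) (m n : ℕ) : ppow a (m + n + 1) = ppow a m * ppow a n := by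
  induction n with
  | zero => rfl
  | succ n ih => rw [show m + (n + 1) + 1 = m + n + 1 + 1 by ring, ppow, ih, ppow, mul_assoc]

lemma ppow_ppow (a : R) (n m : ℕ) : ppow (ppow a n) m = ppow a (n + m + n * m) := by
  induction m with
  | zero => simp [ppow]
  | succ m ih => rw [ppow, ih, ← ppow_add_add_one]; ring_nf

lemma map_ppow {S F : Type*} [NonUnitalRing S] [FunLike F R S] [NonUnitalRingHomClass F R S]
    (f : F) (a : R) (n : ℕ) : f (ppow a n) = ppow (f a) n := by
  induction n with
  | zero => rfl
  | succ n ih => rw [ppow, map_mul, ih, ppow]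

lemma IsNilElem.of_ppow {a : R} {n : ℕ} (h : IsNilElem (ppow a n)) : IsNilElem a := by
  obtain ⟨m, hm⟩ := h
  exact ⟨n + m + n * m, by rwa [← ppow_ppow]⟩

lemma TwoSidedIdeal.ppow_sub_ppow_mem (I : TwoSidedIdeal R) {a b : R} (h : a - b ∈ I) (n : ℕ) :
    ppow a n - ppow b n ∈ I := by
  induction n with
  | zero => exact h
  | succ n ih =>
    have key : ppow a (n + 1) - ppow b (n + 1) =
        (ppow a n - ppow b n) * a + ppow b n * (a - b) := by
      simp only [ppow]; noncomm_ring
    rw [key]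
    exact I.add_mem (I.mul_mem_right _ _ ih) (I.mul_mem_left _ _ h)

lemma TwoSidedIdeal.isNil_bot : (⊥ : TwoSidedIdeal R).IsNil :=
  fun _ hx ↦ ⟨0, (mem_bot R).1 hx⟩

lemma TwoSidedIdeal.IsNil.sup {I J : TwoSidedIdeal R} (hI : I.IsNil) (hJ : J.IsNil) :
    (I ⊔ J).IsNil := by
  intro x hx
  obtain ⟨y, hy, z, hz, rfl⟩ := mem_sup.1 hx
  obtain ⟨m, hm⟩ := hJ z hz
  have h : ppow (y + z) m ∈ I := by
    simpa [hm] using I.ppow_sub_ppow_mem (a := y + z) (b := z) (by simpa using hy) m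
  exact (hI _ h).of_ppow

lemma TwoSidedIdeal.mem_sSup_of_directedOn {S : Set (TwoSidedIdeal R)} (hne : S.Nonempty)
    (hdir : DirectedOn (· ≤ ·) S) {x : R} (hx : x ∈ sSup S) : ∃ I ∈ S, x ∈ I := by
  obtain ⟨I₀, hI₀⟩ := hne
  let U : TwoSidedIdeal R := .mk' {y | ∃ I ∈ S, y ∈ I} ⟨I₀, hI₀, I₀.zero_mem⟩
    (fun ⟨I, hI, hxI⟩ ⟨J, hJ, hyJ⟩ ↦
      let ⟨K, hK, hIK, hJK⟩ := hdir I hI J hJ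
      ⟨K, hK, K.add_mem (hIK hxI) (hJK hyJ)⟩)
    (fun ⟨I, hI, hxI⟩ ↦ ⟨I, hI, I.neg_mem hxI⟩)
    (fun ⟨I, hI, hyI⟩ ↦ ⟨I, hI, I.mul_mem_left _ _ hyI⟩)
    (fun ⟨I, hI, hxI⟩ ↦ ⟨I, hI, I.mul_mem_right _ _ hxI⟩)
  have hle : sSup S ≤ U := sSup_le fun I hI y hy ↦ (mem_mk' ..).2 ⟨I, hI, hy⟩
  exact (mem_mk' _ _ _ _ _ _ x).1 (hle hx)

lemma isNil_nilRad : (nilRad R).IsNil := by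
  intro x hx
  have hdir : DirectedOn (· ≤ ·) {I : TwoSidedIdeal R | I.IsNil} := fun I hI J hJ ↦
    ⟨I ⊔ J, hI.sup hJ, le_sup_left, le_sup_right⟩
  obtain ⟨I, hI, hxI⟩ := mem_sSup_of_directedOn ⟨⊥, isNil_bot⟩ hdir hx
  exact hI x hxI

lemma le_nilRad {I : TwoSidedIdeal R} (hI : I.IsNil) : I ≤ nilRad R :=
  le_sSup hI

lemma isNil_of_le_nilRad {I : TwoSidedIdeal R} (hI : I ≤ nilRad R) : I.IsNil :=
  fun x hx ↦ isNil_nilRad x (hI hx)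

/-- An extension of a nil ideal by a nil ideal is nil. -/
lemma isNil_comap_nilRad {S : Type*} [NonUnitalRing S] (f : R →ₙ+* S) (hf : (ker f).IsNil) :
    (comap f (nilRad S)).IsNil := by
  intro x hx
  obtain ⟨n, hn⟩ := isNil_nilRad _ ((mem_comap f).1 hx)
  exact (hf _ ((mem_ker f).2 (by rwa [map_ppow]))).of_ppow

def TwoSidedIdeal.quotientMk (I : TwoSidedIdeal R) : R →ₙ+* I.ringCon.Quotient where
  toFun := (↑)
  map_mul' _ _ := rfl
  map_zero' := rfl
  map_add' _ _ := rfl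

lemma TwoSidedIdeal.ker_quotientMk (I : TwoSidedIdeal R) : ker I.quotientMk = I := by
  ext x
  exact (RingCon.eq _).trans (I.mem_iff x).symm

lemma TwoSidedIdeal.iSup_span_singleton (s : Set R) : ⨆ a ∈ s, span {a} = span s := by
  have gc : GaloisConnection (span : Set R → TwoSidedIdeal R) (↑) := fun _ _ ↦ span_le
  rw [← gc.l_iSup₂]
  exact congrArg span (Set.biUnion_of_singleton s)

end

section Graded

variable {R ι : Type*} [NonUnitalRing R] [AddCommGroup ι] [DecidableEq ι]
  (ℳ : ι → AddSubgroup R) [SetLike.GradedMul ℳ] [Decomposition ℳ]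

lemma DirectSum.coe_decompose_mul_of_left_mem_sub {r : R} {j : ι} (hr : r ∈ ℳ j)
    (x : R) (i : ι) :
    (decompose ℳ (r * x) i : R) = r * decompose ℳ x (i - j) := by
  induction x using Decomposition.inductionOn ℳ with
  | zero => simp
  | @homogeneous k x =>
    have hmem : r * x ∈ ℳ (j + k) := SetLike.mul_mem_graded hr x.2
    by_cases h : i = j + k
    · rw [h, decompose_of_mem_same ℳ hmem, add_sub_cancel_left, decompose_of_mem_same ℳ x.2]
    · rw [decompose_of_mem_ne ℳ hmem (Ne.symm h),
        decompose_of_mem_ne ℳ x.2 (fun hk ↦ h (by rw [hk, add_sub_cancel])), mul_zero]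
  | add a b ha hb =>
    simp only [mul_add, decompose_add, DirectSum.add_apply, AddSubgroup.coe_add, ha, hb]

lemma DirectSum.coe_decompose_mul_of_right_mem_sub {r : R} {j : ι} (hr : r ∈ ℳ j)
    (x : R) (i : ι) :
    (decompose ℳ (x * r) i : R) = decompose ℳ x (i - j) * r := by
  induction x using Decomposition.inductionOn ℳ with
  | zero => simp
  | @homogeneous k x =>
    have hmem : x * r ∈ ℳ (k + j) := SetLike.mul_mem_graded x.2 hr
    by_cases h : i = k + j
    · rw [h, decompose_of_mem_same ℳ hmem, add_sub_cancel_right, decompose_of_mem_same ℳ x.2]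
    · rw [decompose_of_mem_ne ℳ hmem (Ne.symm h),
        decompose_of_mem_ne ℳ x.2 (fun hk ↦ h (by rw [hk, sub_add_cancel])), zero_mul]
  | add a b ha hb =>
    simp only [add_mul, decompose_add, DirectSum.add_apply, AddSubgroup.coe_add, ha, hb]

/-- The largest homogeneous two-sided ideal contained in `I`. -/
def TwoSidedIdeal.homogeneousCore (I : TwoSidedIdeal R) : TwoSidedIdeal R :=
  .mk' {x | ∀ i, (decompose ℳ x i : R) ∈ I}
    (fun i ↦ by simp)
    (fun hx hy i ↦ by simpa using I.add_mem (hx i) (hy i))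
    (fun hx i ↦ by
      rw [decompose_neg, DFinsupp.neg_apply, AddSubgroup.coe_neg]
      exact I.neg_mem (hx i))
    (fun {r x} hx ↦ by
      induction r using Decomposition.inductionOn ℳ with
      | zero => simp
      | homogeneous r =>
        intro i
        rw [coe_decompose_mul_of_left_mem_sub ℳ r.2]
        exact I.mul_mem_left _ _ (hx _)
      | add a b ha hb => intro i; simpa [add_mul] using I.add_mem (ha i) (hb i))
    (fun {x r} hx ↦ by
      induction r using Decomposition.inductionOn ℳ with
      | zero => simp
      | homogeneous r =>
        intro i
        rw [coe_decompose_mul_of_right_mem_sub ℳ r.2]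
        exact I.mul_mem_right _ _ (hx _)
      | add a b ha hb => intro i; simpa [mul_add] using I.add_mem (ha i) (hb i))

variable {ℳ}

lemma TwoSidedIdeal.mem_homogeneousCore {I : TwoSidedIdeal R} {x : R} :
    x ∈ I.homogeneousCore ℳ ↔ ∀ i, (decompose ℳ x i : R) ∈ I :=
  mem_mk' ..

lemma TwoSidedIdeal.mem_homogeneousCore_of_mem {I : TwoSidedIdeal R} {x : R} {j : ι}
    (hj : x ∈ ℳ j) (hx : x ∈ I) : x ∈ I.homogeneousCore ℳ := by
  refine mem_homogeneousCore.2 fun i ↦ ?_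
  by_cases h : i = j
  · rwa [h, decompose_of_mem_same ℳ hj]
  · rw [decompose_of_mem_ne ℳ hj (Ne.symm h)]
    exact I.zero_mem

lemma TwoSidedIdeal.span_le_homogeneousCore_span {s : Set R}
    (hs : ∀ a ∈ s, ∃ i, a ∈ ℳ i) :
    span s ≤ (span s).homogeneousCore ℳ :=
  span_le.2 fun a ha ↦ mem_homogeneousCore_of_mem (hs a ha).choose_spec (subset_span ha)

end Graded

/-- Let `R = ⊕_{i ∈ ℤ} Rᵢ` be a `ℤ`-graded (associative, not necessarily unital) ring, let `W`
be the set of homogeneous elements of `R` lying in the nil radical, and let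
`M = ∑_{a ∈ W} ⟨a⟩` be the sum of the two-sided ideals generated by the elements of `W`.
Then `M` is a homogeneous nil ideal of `R`, and the nil radical of `R/M` contains no nonzero
homogeneous elements (where a homogeneous element of `R/M` is the image of a homogeneous element
of `R` under the quotient map). -/
theorem homogeneous_nil_ideal_sum {R : Type*} [NonUnitalRing R]
    (ℳ : ℤ → AddSubgroup R) [SetLike.GradedMul ℳ] [DirectSum.Decomposition ℳ]
    (W : Set R) (hW : W = {x : R | x ∈ nilRad R ∧ ∃ i : ℤ, x ∈ ℳ i})
    (M : TwoSidedIdeal R) (hM : M = ⨆ a ∈ W, TwoSidedIdeal.span {a}) :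
    (∀ x ∈ M, ∀ i : ℤ, (DirectSum.decompose ℳ x i : R) ∈ M) ∧
    M.IsNil ∧
    (∀ y ∈ nilRad M.ringCon.Quotient,
      (∃ i : ℤ, ∃ x ∈ ℳ i, (x : M.ringCon.Quotient) = y) → y = 0) := by
  rw [iSup_span_singleton] at hM
  subst hM
  have hM_nil : (span W).IsNil := isNil_of_le_nilRad <| span_le.2 fun a ha ↦ (hW ▸ ha).1
  have hM_homogeneous : span W ≤ (span W).homogeneousCore ℳ :=
    span_le_homogeneousCore_span fun a ha ↦ (hW ▸ ha).2
  refine ⟨fun x hx ↦ mem_homogeneousCore.1 (hM_homogeneous hx), hM_nil, ?_⟩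
  rintro _ hy ⟨i, x, hxi, rfl⟩
  have hx : x ∈ nilRad R :=
    le_nilRad (isNil_comap_nilRad (span W).quotientMk (by rwa [ker_quotientMk]))
      ((mem_comap _).2 hy)
  have hxW : x ∈ span W := subset_span (hW ▸ ⟨hx, i, hxi⟩)
  exact (mem_ker (span W).quotientMk).1 (by rwa [ker_quotientMk])
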